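/- arXiv:2507.23559 — 5 statements merged into one kernel-verified Lean document; each statement's English description precedes it below -/
import Mathlib

section
/- For symmetric matrices X, Y ∈ Sym(n), the infimum over R ∈ O(n) of the Frobenius norm ‖R Y Rᵀ − X‖_F equals the ℓ² distance between the sorted eigenvalue vectors of X and Y, i.e. (∑_{i=1}^n |λ_i(X) − λ_i(Y)|²)^{1/2}, where λ_1(X) ≤ ⋯ ≤ λ_n(X) and λ_1(Y) ≤ ⋯ ≤ λ_n(Y) are the eigenvalues counted with multiplicity. -/
open Matrix BigOperators

noncomputable def frobNorm {n : ℕ} (A : Matrix (Fin n) (Fin n) ℝ) : ℝ :=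
  Real.sqrt (∑ i, ∑ j, (A i j) ^ 2)

def IsOrth {n : ℕ} (R : Matrix (Fin n) (Fin n) ℝ) : Prop := R * Rᵀ = 1

/-- Sorted (nondecreasing) vector of eigenvalues of a real symmetric matrix. -/
noncomputable def sortedEig {n : ℕ} (X : Matrix (Fin n) (Fin n) ℝ) : Fin n → ℝ :=
  if h : X.IsHermitian then h.eigenvalues ∘ Tuple.sort h.eigenvalues else 0

/-- ℓ² spectral distance between symmetric matrices. -/
noncomputable def specDist {n : ℕ} (X Y : Matrix (Fin n) (Fin n) ℝ) : ℝ :=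
  Real.sqrt (∑ i, (sortedEig X i - sortedEig Y i) ^ 2)

/-!
Diagonalise `X = U diag(λ) Uᵀ` and `Y = V diag(μ) Vᵀ` with sorted eigenvalues. Conjugating by
`Uᵀ` turns `‖R Y Rᵀ - X‖²` into `‖W diag(μ) Wᵀ - diag(λ)‖²` with `W = Uᵀ R V` orthogonal, which
equals `∑ λᵢ² + ∑ μᵢ² - 2 ∑ᵢⱼ Wᵢⱼ² λᵢ μⱼ`. The matrix `(Wᵢⱼ²)` is doubly stochastic, so by
Birkhoff's theorem and the rearrangement inequality the cross term is at most `∑ λᵢ μᵢ`, giving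
`‖R Y Rᵀ - X‖ ≥ ‖λ - μ‖`. Equality holds for `R = U Vᵀ`, which aligns the sorted eigenbases.
-/

open Finset

section OrthogonalConjugation

variable {ι : Type*} [Fintype ι]

lemma sum_sq_eq_trace_mul_transpose {κ : Type*} [Fintype κ] (A : Matrix ι κ ℝ) :
    ∑ i, ∑ j, A i j ^ 2 = trace (A * Aᵀ) := by
  simp [trace, mul_apply, sq]

lemma conj_diagonal_apply {κ R : Type*} [CommSemiring R] [DecidableEq ι] (M : Matrix κ ι R)
    (v : ι → R) (i j : κ) : (M * diagonal v * Mᵀ) i j = ∑ k, M i k * v k * M j k := by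
  rw [mul_apply]
  simp only [mul_diagonal, transpose_apply]

variable [DecidableEq ι]

lemma sum_sq_conj_orthogonal {Q : Matrix ι ι ℝ} (hQ : Q ∈ orthogonalGroup ι ℝ)
    (A : Matrix ι ι ℝ) : ∑ i, ∑ j, (Q * A * Qᵀ) i j ^ 2 = ∑ i, ∑ j, A i j ^ 2 := by
  have hQQ : Qᵀ * Q = 1 := (mem_orthogonalGroup_iff' ι ℝ).mp hQ
  simp only [sum_sq_eq_trace_mul_transpose, transpose_mul, transpose_transpose]
  calc trace (Q * A * Qᵀ * (Q * (Aᵀ * Qᵀ))) = trace (Q * (A * (Qᵀ * Q) * Aᵀ) * Qᵀ) := by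
        simp only [Matrix.mul_assoc]
    _ = trace (A * Aᵀ) := by rw [trace_mul_cycle, hQQ, Matrix.one_mul, Matrix.mul_one]

lemma sum_sq_diagonal (v : ι → ℝ) : ∑ i, ∑ j, diagonal v i j ^ 2 = ∑ i, v i ^ 2 := by
  simp [diagonal_apply, ite_pow]

lemma sum_sq_sub_diagonal (M : Matrix ι ι ℝ) (a : ι → ℝ) :
    ∑ i, ∑ j, (M - diagonal a) i j ^ 2 =
      ∑ i, ∑ j, M i j ^ 2 - 2 * ∑ i, M i i * a i + ∑ i, a i ^ 2 := by
  rw [← sum_sq_diagonal a, mul_sum]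
  simp only [Matrix.sub_apply, sub_sq, sum_add_distrib, sum_sub_distrib]
  congr 2
  refine sum_congr rfl fun i _ => ?_
  simp [diagonal_apply, mul_assoc]

lemma sum_sq_conj_sub_conj {U : Matrix ι ι ℝ} (hU : U ∈ orthogonalGroup ι ℝ)
    (V R : Matrix ι ι ℝ) (a b : ι → ℝ) :
    ∑ i, ∑ j, (R * (V * diagonal b * Vᵀ) * Rᵀ - U * diagonal a * Uᵀ) i j ^ 2 =
      ∑ i, ∑ j, ((Uᵀ * R * V) * diagonal b * (Uᵀ * R * V)ᵀ - diagonal a) i j ^ 2 := by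
  have hUU : Uᵀ * U = 1 := (mem_orthogonalGroup_iff' ι ℝ).mp hU
  have hconj : Uᵀ * (R * (V * diagonal b * Vᵀ) * Rᵀ - U * diagonal a * Uᵀ) * Uᵀᵀ =
      (Uᵀ * R * V) * diagonal b * (Uᵀ * R * V)ᵀ - diagonal a := by
    simp only [transpose_transpose, transpose_mul, Matrix.mul_sub, Matrix.sub_mul,
      Matrix.mul_assoc]
    rw [← Matrix.mul_assoc Uᵀ U, hUU, Matrix.one_mul, Matrix.mul_one]
  rw [← hconj, sum_sq_conj_orthogonal (transpose_mem_unitaryGroup_iff.mpr hU)]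

end OrthogonalConjugation

section DoublyStochastic

variable {ι : Type*} [Fintype ι] [DecidableEq ι]

lemma sum_permMatrix_mul_le {a b : ι → ℝ} (hab : Monovary a b) (σ : Equiv.Perm ι) :
    ∑ i, ∑ j, σ.permMatrix ℝ i j * (a i * b j) ≤ ∑ i, a i * b i := by
  have hrow : ∀ i, ∑ j, σ.permMatrix ℝ i j * (a i * b j) = a i • b (σ i) := fun i => by
    simp [Equiv.Perm.permMatrix, PEquiv.toMatrix_apply, Equiv.toPEquiv_apply]
  simpa only [hrow, smul_eq_mul] using hab.sum_smul_comp_perm_le_sum_smul (σ := σ)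

lemma sum_mul_le_of_mem_doublyStochastic {a b : ι → ℝ} (hab : Monovary a b)
    {S : Matrix ι ι ℝ} (hS : S ∈ doublyStochastic ℝ ι) :
    ∑ i, ∑ j, S i j * (a i * b j) ≤ ∑ i, a i * b i := by
  have hlin : IsLinearMap ℝ fun M : Matrix ι ι ℝ => ∑ i, ∑ j, M i j * (a i * b j) := by
    constructor
    · intro M N
      simp [add_mul, sum_add_distrib]
    · intro c M
      simp [mul_sum, mul_assoc]
  rw [← SetLike.mem_coe, doublyStochastic_eq_convexHull_permMatrix] at hS
  refine convexHull_min ?_ (convex_halfSpace_le hlin _) hS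
  rintro _ ⟨σ, rfl⟩
  exact sum_permMatrix_mul_le hab σ

lemma of_sq_mem_doublyStochastic {W : Matrix ι ι ℝ} (hW : W ∈ orthogonalGroup ι ℝ) :
    (of fun i j => W i j ^ 2) ∈ doublyStochastic ℝ ι := by
  rw [mem_doublyStochastic_iff_sum]
  refine ⟨fun i j => sq_nonneg _, fun i => ?_, fun j => ?_⟩
  · simpa [mul_apply, sq] using congr_fun₂ ((mem_orthogonalGroup_iff ι ℝ).mp hW) i i
  · simpa [mul_apply, sq] using congr_fun₂ ((mem_orthogonalGroup_iff' ι ℝ).mp hW) j j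

lemma sum_sub_sq_le_sum_sq_conj_diagonal_sub_diagonal {a b : ι → ℝ} (hab : Monovary a b)
    {W : Matrix ι ι ℝ} (hW : W ∈ orthogonalGroup ι ℝ) :
    ∑ i, (a i - b i) ^ 2 ≤ ∑ i, ∑ j, (W * diagonal b * Wᵀ - diagonal a) i j ^ 2 := by
  have hcross : ∑ i, (W * diagonal b * Wᵀ) i i * a i = ∑ i, ∑ j, W i j ^ 2 * (a i * b j) := by
    refine sum_congr rfl fun i _ => ?_
    rw [conj_diagonal_apply, sum_mul]
    exact sum_congr rfl fun j _ => by ring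
  have hbound := sum_mul_le_of_mem_doublyStochastic hab (of_sq_mem_doublyStochastic hW)
  simp only [of_apply] at hbound
  rw [sum_sq_sub_diagonal, sum_sq_conj_orthogonal hW, sum_sq_diagonal, hcross]
  have hexpand : ∑ i, (a i - b i) ^ 2 = ∑ i, a i ^ 2 - 2 * ∑ i, a i * b i + ∑ i, b i ^ 2 := by
    simp only [sub_sq, sum_add_distrib, sum_sub_distrib, mul_sum, mul_assoc]
  linarith

end DoublyStochastic

section SortedSpectrum

variable {n : ℕ} {X Y : Matrix (Fin n) (Fin n) ℝ}

lemma sortedEig_monotone (hX : X.IsHermitian) : Monotone (sortedEig X) := by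
  rw [sortedEig, dif_pos hX]
  exact Tuple.monotone_sort hX.eigenvalues

lemma Matrix.IsHermitian.exists_orthogonal_eq_conj_diagonal_sortedEig (hX : X.IsHermitian) :
    ∃ U ∈ orthogonalGroup (Fin n) ℝ, X = U * diagonal (sortedEig X) * Uᵀ := by
  set U₀ : Matrix (Fin n) (Fin n) ℝ := (hX.eigenvectorUnitary : Matrix (Fin n) (Fin n) ℝ)
  have hU₀ : U₀ * U₀ᵀ = 1 := mem_unitaryGroup_iff.mp hX.eigenvectorUnitary.2
  have hspec : X = U₀ * diagonal hX.eigenvalues * U₀ᵀ := by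
    simpa [star_eq_conjTranspose] using hX.spectral_theorem
  set σ := Tuple.sort hX.eigenvalues
  refine ⟨U₀.submatrix id σ, (mem_orthogonalGroup_iff _ _).mpr ?_, ?_⟩
  · ext i j
    rw [← hU₀]
    simp only [mul_apply, transpose_apply, submatrix_apply, id]
    exact Fintype.sum_equiv σ _ _ fun k => rfl
  · ext i j
    rw [sortedEig, dif_pos hX, conj_diagonal_apply]
    conv_lhs => rw [hspec, conj_diagonal_apply]
    exact (Fintype.sum_equiv σ _ _ fun k => rfl).symm

end SortedSpectrum

section SpectralDistance

variable {n : ℕ} {X Y : Matrix (Fin n) (Fin n) ℝ}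

lemma specDist_le_frobNorm (hX : X.IsHermitian) (hY : Y.IsHermitian)
    {R : Matrix (Fin n) (Fin n) ℝ} (hR : R ∈ orthogonalGroup (Fin n) ℝ) :
    specDist X Y ≤ frobNorm (R * Y * Rᵀ - X) := by
  obtain ⟨U, hU, hXU⟩ := hX.exists_orthogonal_eq_conj_diagonal_sortedEig
  obtain ⟨V, hV, hYV⟩ := hY.exists_orthogonal_eq_conj_diagonal_sortedEig
  have hW : Uᵀ * R * V ∈ orthogonalGroup (Fin n) ℝ :=
    mul_mem (mul_mem (transpose_mem_unitaryGroup_iff.mpr hU) hR) hV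
  have hreduce := sum_sq_conj_sub_conj hU V R (sortedEig X) (sortedEig Y)
  rw [← hXU, ← hYV] at hreduce
  rw [specDist, frobNorm, hreduce]
  exact Real.sqrt_le_sqrt <| sum_sub_sq_le_sum_sq_conj_diagonal_sub_diagonal
    ((sortedEig_monotone hX).monovary (sortedEig_monotone hY)) hW

lemma exists_frobNorm_eq_specDist (hX : X.IsHermitian) (hY : Y.IsHermitian) :
    ∃ R ∈ orthogonalGroup (Fin n) ℝ, frobNorm (R * Y * Rᵀ - X) = specDist X Y := by
  obtain ⟨U, hU, hXU⟩ := hX.exists_orthogonal_eq_conj_diagonal_sortedEig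
  obtain ⟨V, hV, hYV⟩ := hY.exists_orthogonal_eq_conj_diagonal_sortedEig
  refine ⟨U * Vᵀ, mul_mem hU (transpose_mem_unitaryGroup_iff.mpr hV), ?_⟩
  have hreduce := sum_sq_conj_sub_conj hU V (U * Vᵀ) (sortedEig X) (sortedEig Y)
  rw [← hXU, ← hYV] at hreduce
  have hW : Uᵀ * (U * Vᵀ) * V = 1 := by
    rw [← Matrix.mul_assoc, (mem_orthogonalGroup_iff' _ _).mp hU, Matrix.one_mul,
      (mem_orthogonalGroup_iff' _ _).mp hV]
  rw [specDist, frobNorm, hreduce, hW, Matrix.one_mul, transpose_one, Matrix.mul_one,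
    diagonal_sub, sum_sq_diagonal]
  exact congrArg Real.sqrt (sum_congr rfl fun i _ => sub_sq_comm _ _)

end SpectralDistance

theorem stmt_0 {n : ℕ} (X Y : Matrix (Fin n) (Fin n) ℝ) (hX : X.IsSymm) (hY : Y.IsSymm) :
    sInf {d : ℝ | ∃ R : Matrix (Fin n) (Fin n) ℝ, IsOrth R ∧ d = frobNorm (R * Y * Rᵀ - X)} =
      specDist X Y := by
  have hXh : X.IsHermitian := isHermitian_iff_isSymm.mpr hX
  have hYh : Y.IsHermitian := isHermitian_iff_isSymm.mpr hY
  refine IsLeast.csInf_eq ⟨?_, ?_⟩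
  · obtain ⟨R, hR, hRd⟩ := exists_frobNorm_eq_specDist hXh hYh
    exact ⟨R, (mem_orthogonalGroup_iff _ _).mp hR, hRd.symm⟩
  · rintro _ ⟨R, hR, rfl⟩
    exact specDist_le_frobNorm hXh hYh ((mem_orthogonalGroup_iff _ _).mpr hR)
end

section
/- For symmetric matrices X, Y, the infimum over orthogonal R of ‖R Y Rᵀ − X‖_F is attained; in particular it is attained at R = Q_X Q_Yᵀ, where Q_X and Q_Y are orthogonal matrices diagonalizing X and Y respectively with eigenvalues sorted in increasing order on the diagonal. -/
open Matrix BigOperators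

section aux

lemma sumSq_eq_trace {n : ℕ} (A : Matrix (Fin n) (Fin n) ℝ) :
    ∑ i, ∑ j, (A i j) ^ 2 = Matrix.trace (A * Aᵀ) := by
  simp [Matrix.trace, Matrix.mul_apply, Matrix.diag, sq]

lemma key_rearrange {n : ℕ} (μ ν : Fin n → ℝ) (hμ : Monotone μ) (hν : Monotone ν)
    (D : Matrix (Fin n) (Fin n) ℝ) (hD : D ∈ doublyStochastic ℝ (Fin n)) :
    ∑ i, ∑ j, μ i * ν j * D i j ≤ ∑ i, μ i * ν i := by
  obtain ⟨w, hw0, hw1, hwD⟩ := exists_eq_sum_perm_of_mem_doublyStochastic hD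
  have hmono : Monovary μ ν := hμ.monovary hν
  calc ∑ i, ∑ j, μ i * ν j * D i j
      = ∑ σ : Equiv.Perm (Fin n), w σ * ∑ i, μ i * ν (σ i) := by
        have hD' : ∀ i j, D i j = ∑ σ : Equiv.Perm (Fin n), w σ * (if σ i = j then (1:ℝ) else 0) := by
          intro i j
          rw [← hwD]
          simp [Equiv.Perm.permMatrix, PEquiv.toMatrix_toPEquiv_eq, Matrix.one_apply,
            Matrix.sum_apply, Equiv.toPEquiv]
        simp only [hD', Finset.mul_sum, mul_ite, mul_one, mul_zero]
        have h1 : ∀ i : Fin n,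
            (∑ j, ∑ σ : Equiv.Perm (Fin n), if σ i = j then μ i * ν j * w σ else 0)
              = ∑ σ : Equiv.Perm (Fin n), μ i * ν (σ i) * w σ := by
          intro i
          rw [Finset.sum_comm]
          simp
        simp only [h1]
        rw [Finset.sum_comm]
        refine Finset.sum_congr rfl fun σ _ => ?_
        refine Finset.sum_congr rfl fun i _ => ?_
        ring
    _ ≤ ∑ σ : Equiv.Perm (Fin n), w σ * ∑ i, μ i * ν i := by
        refine Finset.sum_le_sum fun σ _ => ?_
        exact mul_le_mul_of_nonneg_left (hmono.sum_mul_comp_perm_le_sum_mul) (hw0 σ)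
    _ = ∑ i, μ i * ν i := by rw [← Finset.sum_mul, hw1, one_mul]

end aux

section aux2

lemma sumSq_conj {n : ℕ} (Q A : Matrix (Fin n) (Fin n) ℝ) (hQ : Q * Qᵀ = 1) :
    ∑ i, ∑ j, ((Q * A * Qᵀ) i j) ^ 2 = ∑ i, ∑ j, (A i j) ^ 2 := by
  have hQ' : Qᵀ * Q = 1 := mul_eq_one_comm.mp hQ
  rw [sumSq_eq_trace, sumSq_eq_trace]
  have : (Q * A * Qᵀ) * (Q * A * Qᵀ)ᵀ = Q * (A * Aᵀ) * Qᵀ := by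
    simp only [Matrix.transpose_mul, Matrix.transpose_transpose]
    calc Q * A * Qᵀ * (Q * (Aᵀ * Qᵀ)) = Q * A * (Qᵀ * Q) * (Aᵀ * Qᵀ) := by
          simp only [Matrix.mul_assoc]
      _ = Q * (A * Aᵀ) * Qᵀ := by rw [hQ']; simp only [Matrix.mul_one, Matrix.mul_assoc]
  rw [this, Matrix.trace_mul_cycle, ← Matrix.mul_assoc, hQ', Matrix.one_mul]

lemma trace_diag_conj {n : ℕ} (μ ν : Fin n → ℝ) (S : Matrix (Fin n) (Fin n) ℝ) :
    Matrix.trace (Matrix.diagonal μ * (S * Matrix.diagonal ν * Sᵀ))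
      = ∑ i, ∑ k, μ i * ν k * (S i k) ^ 2 := by
  simp only [Matrix.trace, Matrix.diag]
  refine Finset.sum_congr rfl fun i _ => ?_
  rw [Matrix.diagonal_mul]
  rw [show (S * Matrix.diagonal ν * Sᵀ) i i = ∑ k, (S * Matrix.diagonal ν) i k * Sᵀ k i from
    Matrix.mul_apply]
  simp only [Matrix.mul_diagonal, Matrix.transpose_apply, Finset.mul_sum]
  refine Finset.sum_congr rfl fun k _ => by ring

lemma sumSq_formula {n : ℕ} (μ ν : Fin n → ℝ) (S : Matrix (Fin n) (Fin n) ℝ)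
    (hS : S * Sᵀ = 1) :
    ∑ i, ∑ j, ((S * Matrix.diagonal ν * Sᵀ - Matrix.diagonal μ) i j) ^ 2
      = ∑ i, (ν i) ^ 2 + ∑ i, (μ i) ^ 2 - 2 * ∑ i, ∑ k, μ i * ν k * (S i k) ^ 2 := by
  have hS' : Sᵀ * S = 1 := mul_eq_one_comm.mp hS
  set A := S * Matrix.diagonal ν * Sᵀ with hA
  have hAt : Aᵀ = A := by
    simp [hA, Matrix.transpose_mul, Matrix.mul_assoc]
  rw [sumSq_eq_trace]
  have hexp : (A - Matrix.diagonal μ) * (A - Matrix.diagonal μ)ᵀ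
      = A * A - A * Matrix.diagonal μ - Matrix.diagonal μ * A
        + Matrix.diagonal μ * Matrix.diagonal μ := by
    rw [Matrix.transpose_sub, hAt, Matrix.diagonal_transpose]
    rw [Matrix.sub_mul, Matrix.mul_sub, Matrix.mul_sub]
    abel
  have hAA : Matrix.trace (A * A) = ∑ i, (ν i) ^ 2 := by
    have : A * A = S * Matrix.diagonal (fun i => ν i * ν i) * Sᵀ := by
      rw [hA]
      calc S * Matrix.diagonal ν * Sᵀ * (S * Matrix.diagonal ν * Sᵀ)
          = S * Matrix.diagonal ν * (Sᵀ * S) * (Matrix.diagonal ν * Sᵀ) := by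
            simp only [Matrix.mul_assoc]
        _ = S * (Matrix.diagonal ν * Matrix.diagonal ν) * Sᵀ := by
            rw [hS']; simp only [Matrix.mul_one, Matrix.mul_assoc]
        _ = S * Matrix.diagonal (fun i => ν i * ν i) * Sᵀ := by
            rw [Matrix.diagonal_mul_diagonal]
    rw [this, Matrix.trace_mul_cycle, hS', Matrix.one_mul, Matrix.trace_diagonal]
    exact Finset.sum_congr rfl fun i _ => (sq (ν i)).symm ▸ (pow_two (ν i)).symm
  have hBB : Matrix.trace (Matrix.diagonal μ * Matrix.diagonal μ) = ∑ i, (μ i) ^ 2 := by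
    rw [Matrix.diagonal_mul_diagonal, Matrix.trace_diagonal]
    exact Finset.sum_congr rfl fun i _ => (pow_two (μ i)).symm
  have hAB : Matrix.trace (A * Matrix.diagonal μ) = ∑ i, ∑ k, μ i * ν k * (S i k) ^ 2 := by
    rw [Matrix.trace_mul_comm, trace_diag_conj]
  have hBA : Matrix.trace (Matrix.diagonal μ * A) = ∑ i, ∑ k, μ i * ν k * (S i k) ^ 2 :=
    trace_diag_conj μ ν S
  rw [hexp, Matrix.trace_add, Matrix.trace_sub, Matrix.trace_sub, hAA, hBB, hAB, hBA]
  ring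

lemma sq_doublyStochastic {n : ℕ} (S : Matrix (Fin n) (Fin n) ℝ) (hS : S * Sᵀ = 1) :
    Matrix.of (fun i j => (S i j) ^ 2) ∈ doublyStochastic ℝ (Fin n) := by
  have hS' : Sᵀ * S = 1 := mul_eq_one_comm.mp hS
  rw [mem_doublyStochastic_iff_sum]
  refine ⟨fun i j => sq_nonneg _, fun i => ?_, fun j => ?_⟩
  · have := congrArg (fun M => M i i) hS
    simpa [Matrix.mul_apply, Matrix.one_apply, sq] using this
  · have := congrArg (fun M => M j j) hS'
    simpa [Matrix.mul_apply, Matrix.one_apply, sq] using this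

end aux2

theorem stmt_1 {n : ℕ} (X Y QX QY : Matrix (Fin n) (Fin n) ℝ) (hX : X.IsSymm) (hY : Y.IsSymm)
    (hQX : IsOrth QX) (hQY : IsOrth QY) (μ ν : Fin n → ℝ) (hμ : Monotone μ) (hν : Monotone ν)
    (hXd : X = QX * Matrix.diagonal μ * QXᵀ) (hYd : Y = QY * Matrix.diagonal ν * QYᵀ) :
    IsOrth (QX * QYᵀ) ∧
    (∀ R : Matrix (Fin n) (Fin n) ℝ, IsOrth R →
      frobNorm ((QX * QYᵀ) * Y * (QX * QYᵀ)ᵀ - X) ≤ frobNorm (R * Y * Rᵀ - X)) := by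
  have hQX' : QXᵀ * QX = 1 := mul_eq_one_comm.mp hQX
  have hQY' : QYᵀ * QY = 1 := mul_eq_one_comm.mp hQY
  have horth : IsOrth (QX * QYᵀ) := by
    unfold IsOrth
    rw [Matrix.transpose_mul, Matrix.transpose_transpose]
    calc QX * QYᵀ * (QY * QXᵀ) = QX * (QYᵀ * QY) * QXᵀ := by simp only [Matrix.mul_assoc]
      _ = 1 := by rw [hQY', Matrix.mul_one, hQX]
  refine ⟨horth, fun R hR => ?_⟩
  -- General decomposition: for orthogonal R, with S = QXᵀ * R * QY,
  -- sum of squares of (R Y Rᵀ - X) equals the formula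
  have main : ∀ R : Matrix (Fin n) (Fin n) ℝ, IsOrth R →
      ∃ S : Matrix (Fin n) (Fin n) ℝ, S * Sᵀ = 1 ∧
        ∑ i, ∑ j, ((R * Y * Rᵀ - X) i j) ^ 2
          = ∑ i, (ν i) ^ 2 + ∑ i, (μ i) ^ 2 - 2 * ∑ i, ∑ k, μ i * ν k * (S i k) ^ 2 := by
    intro R hR
    refine ⟨QXᵀ * R * QY, ?_, ?_⟩
    · calc QXᵀ * R * QY * (QXᵀ * R * QY)ᵀ
          = QXᵀ * (R * (QY * QYᵀ) * Rᵀ) * QX := by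
            simp only [Matrix.transpose_mul, Matrix.transpose_transpose, Matrix.mul_assoc]
        _ = 1 := by rw [hQY, Matrix.mul_one, hR, Matrix.mul_one, hQX']
    · set S := QXᵀ * R * QY with hSdef
      have hQXS : QX * S = R * QY := by
        rw [hSdef]
        calc QX * (QXᵀ * R * QY) = (QX * QXᵀ) * (R * QY) := by simp only [Matrix.mul_assoc]
          _ = R * QY := by rw [hQX, Matrix.one_mul]
      have hkey : R * Y * Rᵀ - X = QX * (S * Matrix.diagonal ν * Sᵀ - Matrix.diagonal μ) * QXᵀ := by
        have h1 : QX * (S * Matrix.diagonal ν * Sᵀ - Matrix.diagonal μ) * QXᵀ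
            = (QX * S) * Matrix.diagonal ν * (QX * S)ᵀ - QX * Matrix.diagonal μ * QXᵀ := by
          simp only [Matrix.mul_sub, Matrix.sub_mul, Matrix.transpose_mul, Matrix.mul_assoc]
        rw [h1, hQXS, hXd, hYd]
        simp only [Matrix.transpose_mul, Matrix.mul_assoc]
      rw [hkey, sumSq_conj QX _ hQX, sumSq_formula μ ν S ?_]
      calc S * Sᵀ = QXᵀ * (R * (QY * QYᵀ) * Rᵀ) * QX := by
            simp only [hSdef, Matrix.transpose_mul, Matrix.transpose_transpose, Matrix.mul_assoc]
        _ = 1 := by rw [hQY, Matrix.mul_one, hR, Matrix.mul_one, hQX']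
  obtain ⟨S, hS, hSval⟩ := main R hR
  obtain ⟨T, hT, hTval⟩ := main (QX * QYᵀ) horth
  -- For the special R₀, T can be replaced by the computation that T := QXᵀ*(QX*QYᵀ)*QY = 1,
  -- but instead we bound directly:
  have hineq : ∀ U : Matrix (Fin n) (Fin n) ℝ, U * Uᵀ = 1 →
      ∑ i, ∑ k, μ i * ν k * (U i k) ^ 2 ≤ ∑ i, μ i * ν i :=
    fun U hU => key_rearrange μ ν hμ hν _ (sq_doublyStochastic U hU)
  -- compute the value for R₀ exactly: its S is 1
  have hT1 : ∑ i, ∑ j, (((QX * QYᵀ) * Y * (QX * QYᵀ)ᵀ - X) i j) ^ 2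
      = ∑ i, (ν i) ^ 2 + ∑ i, (μ i) ^ 2 - 2 * ∑ i, μ i * ν i := by
    have hkey : (QX * QYᵀ) * Y * (QX * QYᵀ)ᵀ - X
        = QX * ((1 : Matrix (Fin n) (Fin n) ℝ) * Matrix.diagonal ν * (1 : Matrix (Fin n) (Fin n) ℝ)ᵀ - Matrix.diagonal μ) * QXᵀ := by
      rw [hXd, hYd]
      simp only [Matrix.transpose_one, Matrix.one_mul, Matrix.mul_one,
        Matrix.transpose_mul, Matrix.transpose_transpose]
      calc QX * QYᵀ * (QY * Matrix.diagonal ν * QYᵀ) * (QY * QXᵀ)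
            - QX * Matrix.diagonal μ * QXᵀ
          = QX * ((QYᵀ * QY) * Matrix.diagonal ν * (QYᵀ * QY)) * QXᵀ
            - QX * Matrix.diagonal μ * QXᵀ := by
            simp only [Matrix.mul_assoc]
        _ = QX * (Matrix.diagonal ν - Matrix.diagonal μ) * QXᵀ := by
            rw [hQY']; simp only [Matrix.one_mul, Matrix.mul_one, Matrix.mul_sub,
              Matrix.sub_mul]
        _ = _ := by simp only [Matrix.mul_sub, Matrix.sub_mul]
    rw [hkey, sumSq_conj QX _ hQX, sumSq_formula μ ν 1 (by simp)]
    congr 1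
    congr 1
    refine Finset.sum_congr rfl fun i _ => ?_
    rw [Finset.sum_eq_single i]
    · simp [Matrix.one_apply]
    · intro k _ hk
      simp [Matrix.one_apply, Ne.symm hk]
    · simp
  -- conclude
  unfold frobNorm
  apply Real.sqrt_le_sqrt
  rw [hT1, hSval]
  have := hineq S hS
  linarith
end

section
/- If X, Y are real symmetric n×n matrices and R is an orthogonal matrix such that X and R Y Rᵀ commute, then ‖R Y Rᵀ − X‖_F² = ∑_{i=1}^n |λ_i(X) − λ_{σ(i)}(Y)|² for some permutation σ of {1,…,n}, where eigenvalues are sorted in increasing order. -/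
open Matrix BigOperators

namespace Stmt2Aux

open Polynomial Module

lemma charpoly_diag {n : ℕ} (d : Fin n → ℝ) :
    (Matrix.diagonal d).charpoly = ∏ i, (X - C (d i)) := by
  rw [Matrix.charpoly, show charmatrix (Matrix.diagonal d)
      = Matrix.diagonal (fun i => (X : ℝ[X]) - C (d i)) from ?_, det_diagonal]
  ext i j
  by_cases h : i = j
  · subst h; simp [charmatrix_apply_eq, Matrix.diagonal_apply_eq]
  · rw [charmatrix_apply_ne _ _ _ h, Matrix.diagonal_apply_ne _ h,
      Matrix.diagonal_apply_ne _ h, map_zero, neg_zero]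

lemma charpoly_conj {n : ℕ} (U V M : Matrix (Fin n) (Fin n) ℝ) (hUV : U * V = 1) :
    (U * M * V).charpoly = M.charpoly := by
  have hdet : (C.mapMatrix U).det * (C.mapMatrix V).det = 1 := by
    rw [← Matrix.det_mul, ← _root_.map_mul, hUV, _root_.map_one, Matrix.det_one]
  have key : charmatrix (U * M * V)
      = C.mapMatrix U * charmatrix M * C.mapMatrix V := by
    rw [charmatrix, charmatrix, _root_.map_mul, _root_.map_mul, Matrix.mul_sub, Matrix.sub_mul]
    congr 1
    have hc : (Matrix.scalar (Fin n)) (X:ℝ[X]) * C.mapMatrix V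
        = C.mapMatrix V * (Matrix.scalar (Fin n)) (X:ℝ[X]) :=
      (Matrix.scalar_commute (X:ℝ[X]) (fun r' => mul_comm _ _) (C.mapMatrix V)).eq
    rw [Matrix.mul_assoc, hc, ← Matrix.mul_assoc, ← _root_.map_mul, hUV, _root_.map_one,
      Matrix.one_mul]
  rw [Matrix.charpoly, Matrix.charpoly, key, Matrix.det_mul, Matrix.det_mul]
  linear_combination M.charmatrix.det * hdet

lemma conj_diag {n : ℕ} (M : Matrix (Fin n) (Fin n) ℝ)
    (b : OrthonormalBasis (Fin n) ℝ (EuclideanSpace ℝ (Fin n))) (μ : Fin n → ℝ)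
    (h : ∀ j, Matrix.toEuclideanLin M (b j) = μ j • b j) :
    star ((EuclideanSpace.basisFun (Fin n) ℝ).toBasis.toMatrix b.toBasis) * M *
      ((EuclideanSpace.basisFun (Fin n) ℝ).toBasis.toMatrix b.toBasis) = Matrix.diagonal μ := by
  set U := (EuclideanSpace.basisFun (Fin n) ℝ).toBasis.toMatrix b.toBasis with hUdef
  have hUmem : U ∈ Matrix.unitaryGroup (Fin n) ℝ :=
    (EuclideanSpace.basisFun (Fin n) ℝ).toMatrix_orthonormalBasis_mem_unitary b
  have hUapp : ∀ i j, U i j = b j i := fun i j => rfl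
  have hmv : ∀ j, M *ᵥ ⇑(b j) = μ j • ⇑(b j) := by
    intro j
    simpa only [toEuclideanLin_apply, WithLp.ofLp_smul] using congr(⇑$(h j))
  have hUmv : ∀ j, U *ᵥ Pi.single j 1 = ⇑(b j) := by
    intro j
    simp only [mulVec_single, mul_one]
    ext i; simp [hUapp i j]
  have hsUmv : ∀ j, star U *ᵥ ⇑(b j) = Pi.single j 1 := by
    intro j
    rw [← hUmv, mulVec_mulVec, Matrix.UnitaryGroup.star_mul_self ⟨U, hUmem⟩, one_mulVec]
  apply Matrix.toEuclideanLin.injective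
  apply Module.Basis.ext (EuclideanSpace.basisFun (Fin n) ℝ).toBasis
  intro i
  simp only [toEuclideanLin_apply, OrthonormalBasis.coe_toBasis, EuclideanSpace.basisFun_apply,
    PiLp.ofLp_single, ← mulVec_mulVec, hUmv, ← mulVec_mulVec, hmv,
    Matrix.diagonal_mulVec_single, mulVec_smul, hsUmv, WithLp.toLp_smul,
    PiLp.toLp_single, Function.comp_apply, mul_one]
  apply PiLp.ext
  intro j
  simp only [PiLp.smul_apply, EuclideanSpace.single_apply, smul_eq_mul, mul_ite, mul_one, mul_zero]

lemma toEuclideanLin_mul' {n : ℕ} (P Q : Matrix (Fin n) (Fin n) ℝ) :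
    Matrix.toEuclideanLin (P * Q) = Matrix.toEuclideanLin P * Matrix.toEuclideanLin Q := by
  ext v
  simp only [Matrix.toEuclideanLin_apply, Module.End.mul_apply]
  simp only [WithLp.ofLp_toLp, Matrix.mulVec_mulVec]

lemma joint_diag {n : ℕ} (Xm Zm : Matrix (Fin n) (Fin n) ℝ) (hX : Xm.IsHermitian)
    (hZ : Zm.IsHermitian) (hc : Xm * Zm = Zm * Xm) :
    ∃ (U : Matrix (Fin n) (Fin n) ℝ) (μ ν : Fin n → ℝ), U * star U = 1 ∧ star U * U = 1 ∧
      star U * Xm * U = Matrix.diagonal μ ∧ star U * Zm * U = Matrix.diagonal ν := by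
  set A := Matrix.toEuclideanLin Xm with hAdef
  set B := Matrix.toEuclideanLin Zm with hBdef
  have hA : A.IsSymmetric := Matrix.isHermitian_iff_isSymmetric.1 hX
  have hB : B.IsSymmetric := Matrix.isHermitian_iff_isSymmetric.1 hZ
  have hAB : Commute A B := by
    rw [Commute, SemiconjBy, hAdef, hBdef, ← toEuclideanLin_mul', ← toEuclideanLin_mul', hc]
  set V : ℝ × ℝ → Submodule ℝ (EuclideanSpace ℝ (Fin n)) :=
    fun i => Module.End.eigenspace A i.2 ⊓ Module.End.eigenspace B i.1 with hVdef
  have hin : DirectSum.IsInternal V :=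
    LinearMap.IsSymmetric.directSum_isInternal_of_commute hA hB hAB
  have hfin : {i | V i ≠ ⊥}.Finite :=
    WellFoundedGT.finite_ne_bot_of_iSupIndep hin.submodule_iSupIndep
  have : Fintype {i // V i ≠ ⊥} := hfin.fintype
  have hin' : DirectSum.IsInternal (fun i : {i // V i ≠ ⊥} => V i) :=
    DirectSum.isInternal_ne_bot_iff.mpr hin
  have hV' := LinearMap.IsSymmetric.orthogonalFamily_eigenspace_inf_eigenspace hA hB
  have hV'' : OrthogonalFamily ℝ (fun i : {i // V i ≠ ⊥} => V i)
      (fun i => (V i.1).subtypeₗᵢ) := fun i j hij => hV' (fun h => hij (Subtype.ext h))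
  have hn : Module.finrank ℝ (EuclideanSpace ℝ (Fin n)) = n := by simp
  set b := hin'.subordinateOrthonormalBasis hn hV'' with hb
  set idx : Fin n → ℝ × ℝ := fun a => (hin'.subordinateOrthonormalBasisIndex hn a hV'').1
    with hidx
  have hmem : ∀ a, b a ∈ V (idx a) :=
    fun a => hin'.subordinateOrthonormalBasis_subordinate hn a hV''
  refine ⟨(EuclideanSpace.basisFun (Fin n) ℝ).toBasis.toMatrix b.toBasis,
    fun a => (idx a).2, fun a => (idx a).1, ?_, ?_, ?_, ?_⟩
  · exact (Matrix.mem_unitaryGroup_iff).mp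
      ((EuclideanSpace.basisFun (Fin n) ℝ).toMatrix_orthonormalBasis_mem_unitary b)
  · exact Matrix.UnitaryGroup.star_mul_self
      ⟨_, (EuclideanSpace.basisFun (Fin n) ℝ).toMatrix_orthonormalBasis_mem_unitary b⟩
  · exact conj_diag Xm b _ (fun j => Module.End.mem_eigenspace_iff.mp (hmem j).1)
  · exact conj_diag Zm b _ (fun j => Module.End.mem_eigenspace_iff.mp (hmem j).2)

lemma sorted_eq_of_perm' {n : ℕ} {f g : Fin n → ℝ}
    (h : List.Perm (List.ofFn f) (List.ofFn g)) :
    f ∘ Tuple.sort f = g ∘ Tuple.sort g := by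
  have h1 : List.ofFn (f ∘ Tuple.sort f) = List.ofFn (g ∘ Tuple.sort g) := by
    refine (fun h1 h2 h3 => List.Perm.eq_of_sortedLE h2 h3 h1) ?_ ?_ ?_
    · exact ((Equiv.Perm.ofFn_comp_perm _ f).trans h).trans
        (Equiv.Perm.ofFn_comp_perm _ g).symm
    · exact List.sortedLE_ofFn_iff.mpr (Tuple.monotone_sort f)
    · exact List.sortedLE_ofFn_iff.mpr (Tuple.monotone_sort g)
  rwa [List.ofFn_inj] at h1

lemma multiset_ofFn' {n : ℕ} (f : Fin n → ℝ) : (Finset.univ.val.map f) = ↑(List.ofFn f) := by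
  simp [List.ofFn_eq_map, Fin.univ_def, Finset.univ]
  rfl

/-- If the charpoly of M equals ∏ (X - C (μ i)), then μ is sortedEig M up to permutation. -/
lemma eq_sorted_comp {n : ℕ} {M : Matrix (Fin n) (Fin n) ℝ} {μ : Fin n → ℝ}
    (hM : M.IsHermitian) (hc1 : M.charpoly = ∏ i, (X - C (μ i))) :
    ∃ π : Equiv.Perm (Fin n), μ = sortedEig M ∘ π := by
  have hsp := hM.spectral_theorem
  have hV1 : (hM.eigenvectorUnitary : Matrix (Fin n) (Fin n) ℝ) *
      star (hM.eigenvectorUnitary : Matrix (Fin n) (Fin n) ℝ) = 1 :=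
    Matrix.mem_unitaryGroup_iff.mp hM.eigenvectorUnitary.2
  have hone : (RCLike.ofReal ∘ hM.eigenvalues : Fin n → ℝ) = hM.eigenvalues := by
    funext i; simp
  have hc2 : M.charpoly = ∏ i, (X - C (hM.eigenvalues i)) := by
    conv_lhs => rw [hsp]
    rw [Unitary.conjStarAlgAut_apply, charpoly_conj _ _ _ hV1, hone, charpoly_diag]
  have hms : (Finset.univ.val.map μ) = (Finset.univ.val.map hM.eigenvalues) := by
    have hr := congrArg Polynomial.roots (hc1.symm.trans hc2)
    rwa [show (∏ i, ((X:ℝ[X]) - C (μ i))) = ((Finset.univ.val.map μ).map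
        (fun a => (X:ℝ[X]) - C a)).prod by rw [Multiset.map_map]; rfl,
      show (∏ i, ((X:ℝ[X]) - C (hM.eigenvalues i))) = ((Finset.univ.val.map hM.eigenvalues).map
        (fun a => (X:ℝ[X]) - C a)).prod by rw [Multiset.map_map]; rfl,
      roots_multiset_prod_X_sub_C, roots_multiset_prod_X_sub_C] at hr
  have hperm : List.Perm (List.ofFn μ) (List.ofFn hM.eigenvalues) := by
    rw [multiset_ofFn', multiset_ofFn'] at hms
    exact Multiset.coe_eq_coe.mp hms
  have hsE : sortedEig M = hM.eigenvalues ∘ Tuple.sort hM.eigenvalues := by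
    rw [sortedEig, dif_pos hM]
  have hkey : μ ∘ Tuple.sort μ = sortedEig M := by
    rw [sorted_eq_of_perm' hperm, ← hsE]
  refine ⟨(Tuple.sort μ)⁻¹, ?_⟩
  funext j
  have := congrFun hkey ((Tuple.sort μ)⁻¹ j)
  simpa using this

end Stmt2Aux

open Stmt2Aux Polynomial in
theorem stmt_2 {n : ℕ} (X Y R : Matrix (Fin n) (Fin n) ℝ) (hX : X.IsSymm) (hY : Y.IsSymm)
    (hR : IsOrth R) (hcomm : X * (R * Y * Rᵀ) = (R * Y * Rᵀ) * X) :
    ∃ σ : Equiv.Perm (Fin n),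
      (frobNorm (R * Y * Rᵀ - X)) ^ 2 = ∑ i, (sortedEig X i - sortedEig Y (σ i)) ^ 2 := by
  set Z := R * Y * Rᵀ with hZdef
  have herm : ∀ {M : Matrix (Fin n) (Fin n) ℝ}, M.IsSymm → M.IsHermitian := by
    intro M hM
    rw [Matrix.IsHermitian, conjTranspose_eq_transpose_of_trivial]; exact hM
  have hZsymm : Z.IsSymm := by
    rw [Matrix.IsSymm, hZdef, Matrix.transpose_mul, Matrix.transpose_mul,
      Matrix.transpose_transpose, hY, Matrix.mul_assoc]
  obtain ⟨U, μ, ν, hU1, hU2, hXd, hZd⟩ := joint_diag X Z (herm hX) (herm hZsymm) hcomm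
  have recon : ∀ {M D : Matrix (Fin n) (Fin n) ℝ}, star U * M * U = D →
      M = U * D * star U := by
    intro M D hD
    calc M = (U * star U) * M * (U * star U) := by rw [hU1, Matrix.one_mul, Matrix.mul_one]
    _ = U * (star U * M * U) * star U := by simp only [Matrix.mul_assoc]
    _ = U * D * star U := by rw [hD]
  have hXeq := recon hXd
  have hZeq := recon hZd
  -- charpoly facts
  have hcX : X.charpoly = ∏ i, (Polynomial.X - Polynomial.C (μ i)) := by
    conv_lhs => rw [hXeq]
    rw [charpoly_conj _ _ _ hU1, charpoly_diag]
  have hcZ : Z.charpoly = ∏ i, (Polynomial.X - Polynomial.C (ν i)) := by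
    conv_lhs => rw [hZeq]
    rw [charpoly_conj _ _ _ hU1, charpoly_diag]
  have hZY : Y.charpoly = ∏ i, (Polynomial.X - Polynomial.C (ν i)) := by
    rw [← hcZ, hZdef, charpoly_conj R Rᵀ Y hR]
  obtain ⟨π, hπ⟩ := eq_sorted_comp (herm hX) hcX
  obtain ⟨ρ', hρ'⟩ := eq_sorted_comp (herm hY) hZY
  -- Frobenius computation
  set W := Z - X with hWdef
  set d : Fin n → ℝ := fun i => ν i - μ i with hddef
  have hWeq : W = U * Matrix.diagonal d * star U := by
    rw [hWdef, hXeq, hZeq, ← Matrix.sub_mul, ← Matrix.mul_sub, Matrix.diagonal_sub]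
  have hWT : Wᵀ = W := by
    rw [hWdef, Matrix.transpose_sub, hZsymm, hX]
  have hsq : (frobNorm W) ^ 2 = ∑ i, ∑ j, (W i j) ^ 2 := by
    rw [frobNorm, Real.sq_sqrt]
    positivity
  have htr : ∑ i, ∑ j, (W i j) ^ 2 = Matrix.trace (W * Wᵀ) := by
    simp only [Matrix.trace, Matrix.diag, Matrix.mul_apply, Matrix.transpose_apply, sq]
  have hWW : W * Wᵀ = U * Matrix.diagonal (fun i => d i * d i) * star U := by
    rw [hWT, hWeq]
    calc U * Matrix.diagonal d * star U * (U * Matrix.diagonal d * star U)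
        = U * (Matrix.diagonal d * ((star U * U) * (Matrix.diagonal d * star U))) := by
          simp only [Matrix.mul_assoc]
    _ = U * (Matrix.diagonal d * (Matrix.diagonal d * star U)) := by
          rw [hU2, Matrix.one_mul]
    _ = U * ((Matrix.diagonal d * Matrix.diagonal d) * star U) := by
          simp only [Matrix.mul_assoc]
    _ = U * Matrix.diagonal (fun i => d i * d i) * star U := by
          rw [Matrix.diagonal_mul_diagonal, Matrix.mul_assoc]
  have htr2 : Matrix.trace (W * Wᵀ) = ∑ i, d i * d i := by
    rw [hWW, Matrix.trace_mul_cycle, hU2, Matrix.one_mul, Matrix.trace_diagonal]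
  refine ⟨π.symm.trans ρ', ?_⟩
  rw [hsq, htr, htr2]
  refine Fintype.sum_equiv π (fun i => d i * d i)
    (fun x => (sortedEig X x - sortedEig Y ((π.symm.trans ρ') x)) ^ 2) ?_
  intro i
  have h1 : μ i = sortedEig X (π i) := congrFun hπ i
  have h2 : ν i = sortedEig Y (ρ' i) := congrFun hρ' i
  simp only [Equiv.trans_apply, Equiv.symm_apply_apply, hddef, ← h1, ← h2]
  ring
end

section
/- The induced map λ̄ : Sym(n)/O(n) → C_n is an isometry when Sym(n)/O(n) carries the quotient distance d(π(X),π(Y)) = inf_{R ∈ O(n)} ‖R Y Rᵀ − X‖_F and C_n ⊆ ℝⁿ carries the Euclidean distance. -/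
open Matrix BigOperators

section Aux

variable {n : ℕ}

lemma isOrth_tm {U : Matrix (Fin n) (Fin n) ℝ} (hU : IsOrth U) : Uᵀ * U = 1 :=
  mul_eq_one_comm.mp hU

lemma frobSq_eq_trace (A : Matrix (Fin n) (Fin n) ℝ) :
    ∑ i, ∑ j, (A i j)^2 = trace (A * Aᵀ) := by
  simp [Matrix.trace, Matrix.diag, mul_apply, sq]

lemma conj_diag_apply (M : Matrix (Fin n) (Fin n) ℝ) (f : Fin n → ℝ) (i j : Fin n) :
    (M * diagonal f * Mᵀ) i j = ∑ k, M i k * f k * M j k := by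
  rw [mul_apply]; simp [mul_diagonal, transpose_apply]

lemma trace_conj {U : Matrix (Fin n) (Fin n) ℝ} (M : Matrix (Fin n) (Fin n) ℝ) (hU : IsOrth U) :
    trace (U * M * Uᵀ) = trace M := by
  rw [trace_mul_comm, ← mul_assoc, isOrth_tm hU, one_mul]

lemma cancel_left {U : Matrix (Fin n) (Fin n) ℝ} (hU : IsOrth U)
    (M : Matrix (Fin n) (Fin n) ℝ) : Uᵀ * (U * M) = M := by
  rw [← mul_assoc, isOrth_tm hU, one_mul]

lemma conj_mul_conj {U : Matrix (Fin n) (Fin n) ℝ} (hU : IsOrth U)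
    (A B : Matrix (Fin n) (Fin n) ℝ) : (U*A*Uᵀ)*(U*B*Uᵀ) = U*(A*B)*Uᵀ := by
  simp only [mul_assoc, cancel_left hU]

lemma trace_conj_diag_sq {U : Matrix (Fin n) (Fin n) ℝ} (hU : IsOrth U) (d : Fin n → ℝ) :
    trace ((U * diagonal d * Uᵀ) * (U * diagonal d * Uᵀ)) = ∑ i, d i ^ 2 := by
  rw [conj_mul_conj hU, trace_conj _ hU, diagonal_mul_diagonal, trace_diagonal]
  simp [sq]

lemma trace_diag_mul (a : Fin n → ℝ) (N : Matrix (Fin n) (Fin n) ℝ) :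
    trace (diagonal a * N) = ∑ i, a i * N i i := by
  simp [Matrix.trace, Matrix.diag, diagonal_mul]

lemma conj_diag_transpose (V : Matrix (Fin n) (Fin n) ℝ) (b : Fin n → ℝ) :
    (V * diagonal b * Vᵀ)ᵀ = V * diagonal b * Vᵀ := by
  rw [transpose_mul, transpose_mul, transpose_transpose, diagonal_transpose, ← mul_assoc]

lemma exists_orth_diag {X : Matrix (Fin n) (Fin n) ℝ} (hX : X.IsSymm) :
    ∃ U, IsOrth U ∧ X = U * diagonal (sortedEig X) * Uᵀ := by
  have hH : X.IsHermitian := by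
    rwa [Matrix.IsHermitian, conjTranspose_eq_transpose_of_trivial]
  set ev := hH.eigenvalues with hev
  set σ := Tuple.sort ev with hσ
  have hs : sortedEig X = ev ∘ σ := dif_pos hH
  set V : Matrix (Fin n) (Fin n) ℝ := (hH.eigenvectorUnitary : Matrix (Fin n) (Fin n) ℝ) with hVdef
  have hVmem := hH.eigenvectorUnitary.2
  have hV : IsOrth V := by
    have := (Matrix.mem_unitaryGroup_iff.mp hVmem)
    rwa [star_eq_conjTranspose, conjTranspose_eq_transpose_of_trivial] at this
  have hspec : X = V * diagonal ev * Vᵀ := by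
    have := hH.spectral_theorem
    rwa [Unitary.conjStarAlgAut_apply, star_eq_conjTranspose, conjTranspose_eq_transpose_of_trivial,
      show RCLike.ofReal ∘ ev = ev from rfl] at this
  refine ⟨V.submatrix id σ, ?_, ?_⟩
  · have h1 : V.submatrix id σ * (V.submatrix id σ)ᵀ = V * Vᵀ := by
      ext i j
      simp only [mul_apply, submatrix_apply, transpose_apply, id]
      exact Equiv.sum_comp σ (fun m => V i m * V j m)
    rw [IsOrth, h1]; exact hV
  · rw [hs]
    ext i j
    rw [hspec, conj_diag_apply, conj_diag_apply]
    simp only [submatrix_apply, Function.comp_apply, id]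
    exact (Equiv.sum_comp σ (fun m => V i m * ev m * V j m)).symm

lemma monotone_sortedEig {X : Matrix (Fin n) (Fin n) ℝ} (hX : X.IsSymm) :
    Monotone (sortedEig X) := by
  have hH : X.IsHermitian := by
    rwa [Matrix.IsHermitian, conjTranspose_eq_transpose_of_trivial]
  rw [show sortedEig X = hH.eigenvalues ∘ Tuple.sort hH.eigenvalues from dif_pos hH]
  exact Tuple.monotone_sort _

lemma stoch_bound (a b : Fin n → ℝ) (ha : Monotone a) (hb : Monotone b)
    {S : Matrix (Fin n) (Fin n) ℝ} (hS : S ∈ doublyStochastic ℝ (Fin n)) :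
    ∑ i, ∑ j, a i * b j * S i j ≤ ∑ i, a i * b i := by
  obtain ⟨w, hw0, hw1, hwS⟩ := exists_eq_sum_perm_of_mem_doublyStochastic hS
  have hSij : ∀ i j, S i j = ∑ σ : Equiv.Perm (Fin n), w σ * (σ.permMatrix ℝ) i j := by
    intro i j; rw [← hwS]; simp [Matrix.sum_apply]
  calc ∑ i, ∑ j, a i * b j * S i j
      = ∑ i, ∑ σ : Equiv.Perm (Fin n), w σ * (a i * b (σ i)) := by
        refine Finset.sum_congr rfl fun i _ => ?_
        have h1 : ∀ j, a i * b j * S i j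
            = ∑ σ : Equiv.Perm (Fin n), w σ * (a i * b j * (σ.permMatrix ℝ) i j) := by
          intro j; rw [hSij, Finset.mul_sum]
          exact Finset.sum_congr rfl fun σ _ => by ring
        rw [Finset.sum_congr rfl fun j _ => h1 j, Finset.sum_comm]
        refine Finset.sum_congr rfl fun σ _ => ?_
        rw [← Finset.mul_sum]
        congr 1
        simp [Equiv.Perm.permMatrix, PEquiv.toMatrix_apply, Equiv.toPEquiv_apply,
          mul_ite, Finset.sum_ite_eq, Finset.sum_ite_eq']
    _ = ∑ σ : Equiv.Perm (Fin n), w σ * ∑ i, a i * b (σ i) := by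
        rw [Finset.sum_comm]
        exact Finset.sum_congr rfl fun σ _ => (Finset.mul_sum _ _ _).symm
    _ ≤ ∑ σ : Equiv.Perm (Fin n), w σ * ∑ i, a i * b i := by
        refine Finset.sum_le_sum fun σ _ => ?_
        exact mul_le_mul_of_nonneg_left ((ha.monovary hb).sum_mul_comp_perm_le_sum_mul) (hw0 σ)
    _ = ∑ i, a i * b i := by rw [← Finset.sum_mul, hw1, one_mul]

/-- Hoffman–Wielandt type inequality. -/
lemma hw_key (a b : Fin n → ℝ) (ha : Monotone a) (hb : Monotone b)
    {U V : Matrix (Fin n) (Fin n) ℝ} (hU : IsOrth U) (hV : IsOrth V) :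
    ∑ i, (a i - b i)^2 ≤
      ∑ i, ∑ j, ((V * diagonal b * Vᵀ - U * diagonal a * Uᵀ) i j)^2 := by
  have hU' : U * Uᵀ = 1 := hU
  have hV' : V * Vᵀ = 1 := hV
  set A := U * diagonal a * Uᵀ with hAdef
  set B := V * diagonal b * Vᵀ with hBdef
  set W := Uᵀ * V with hWdef
  have hWo : IsOrth W := by
    show W * Wᵀ = 1
    rw [hWdef, transpose_mul, transpose_transpose, mul_assoc, ← mul_assoc V Vᵀ U, hV',
      one_mul, isOrth_tm hU]
  have hWo' : W * Wᵀ = 1 := hWo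
  have hWrow : ∀ i, ∑ j, (W i j)^2 = 1 := by
    intro i
    have h2 : (W * Wᵀ) i i = ∑ j, W i j ^ 2 := by
      rw [mul_apply]; simp [transpose_apply, sq]
    rw [← h2, hWo', one_apply_eq]
  have hWcol : ∀ j, ∑ i, (W i j)^2 = 1 := by
    intro j
    have h2 : (Wᵀ * W) j j = ∑ i, W i j ^ 2 := by
      rw [mul_apply]; simp [transpose_apply, sq]
    rw [← h2, isOrth_tm hWo, one_apply_eq]
  have hSmem : (Matrix.of fun i j => (W i j)^2) ∈ doublyStochastic ℝ (Fin n) := by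
    rw [mem_doublyStochastic_iff_sum]
    exact ⟨fun i j => sq_nonneg _, fun i => hWrow i, fun j => hWcol j⟩
  have hAB : trace (A * B) = ∑ i, ∑ j, a i * b j * (W i j)^2 := by
    have hABeq : A * B = U * (diagonal a * (W * diagonal b * Wᵀ)) * Uᵀ := by
      rw [hAdef, hBdef, hWdef, transpose_mul, transpose_transpose]
      simp only [mul_assoc]
      rw [hU', mul_one]
    rw [hABeq, trace_conj _ hU, trace_diag_mul]
    refine Finset.sum_congr rfl fun i _ => ?_
    rw [conj_diag_apply, Finset.mul_sum]
    exact Finset.sum_congr rfl fun j _ => by ring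
  have hAA : trace (A * A) = ∑ i, a i ^ 2 := trace_conj_diag_sq hU a
  have hBB : trace (B * B) = ∑ i, b i ^ 2 := trace_conj_diag_sq hV b
  have hexp : ∑ i, ∑ j, ((B - A) i j)^2
      = ∑ i, b i ^ 2 + ∑ i, a i ^ 2 - 2 * trace (A * B) := by
    rw [frobSq_eq_trace]
    have ht : (B - A)ᵀ = B - A := by
      rw [transpose_sub, hAdef, hBdef, conj_diag_transpose, conj_diag_transpose]
    rw [ht, sub_mul, mul_sub, mul_sub, trace_sub, trace_sub, trace_sub,
      trace_mul_comm B A, hAA, hBB]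
    ring
  have hstoch : trace (A * B) ≤ ∑ i, a i * b i := by
    rw [hAB]; exact stoch_bound a b ha hb hSmem
  have hleft : ∑ i, (a i - b i)^2 = ∑ i, a i ^ 2 + ∑ i, b i ^ 2 - 2 * ∑ i, (a i * b i) := by
    rw [← Finset.sum_add_distrib, Finset.mul_sum, ← Finset.sum_sub_distrib]
    exact Finset.sum_congr rfl fun i _ => by ring
  rw [hexp, hleft]
  linarith

end Aux

/-- The sorted-eigenvalue map descends to an isometry: the quotient distance on
Sym(n)/O(n) equals the Euclidean distance between sorted eigenvalue vectors in Cₙ. -/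
theorem stmt_7 {n : ℕ} (X Y : Matrix (Fin n) (Fin n) ℝ) (hX : X.IsSymm) (hY : Y.IsSymm) :
    sInf {d : ℝ | ∃ R : Matrix (Fin n) (Fin n) ℝ, IsOrth R ∧ d = frobNorm (R * Y * Rᵀ - X)} =
      dist ((WithLp.equiv 2 (Fin n → ℝ)).symm (sortedEig X))
           ((WithLp.equiv 2 (Fin n → ℝ)).symm (sortedEig Y)) := by
  obtain ⟨U, hU, hXU⟩ := exists_orth_diag hX
  obtain ⟨V, hV, hYV⟩ := exists_orth_diag hY
  set a := sortedEig X with ha'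
  set b := sortedEig Y with hb'
  have ha : Monotone a := monotone_sortedEig hX
  have hb : Monotone b := monotone_sortedEig hY
  have hdist : dist ((WithLp.equiv 2 (Fin n → ℝ)).symm a) ((WithLp.equiv 2 (Fin n → ℝ)).symm b)
      = Real.sqrt (∑ i, (a i - b i)^2) := by
    rw [EuclideanSpace.dist_eq]
    congr 1
    refine Finset.sum_congr rfl fun i _ => ?_
    rw [WithLp.equiv_symm_apply, PiLp.toLp_apply, PiLp.toLp_apply, Real.dist_eq, sq_abs]
  rw [hdist]
  refine IsLeast.csInf_eq ⟨?_, ?_⟩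
  · -- membership: R = U * Vᵀ attains the bound
    refine ⟨U * Vᵀ, ?_, ?_⟩
    · show (U * Vᵀ) * (U * Vᵀ)ᵀ = 1
      rw [transpose_mul, transpose_transpose]
      simp only [mul_assoc, cancel_left hV]
      exact hU
    · have hform : (U * Vᵀ) * Y * (U * Vᵀ)ᵀ = U * diagonal b * Uᵀ := by
        rw [hYV, transpose_mul, transpose_transpose]
        simp only [mul_assoc, cancel_left hV]
      have hdiff : U * diagonal b * Uᵀ - U * diagonal a * Uᵀ
          = U * diagonal (b - a) * Uᵀ := by
        have h3 : diagonal (b - a) = diagonal b - diagonal a := by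
          ext i j; by_cases h : i = j <;> simp [diagonal, h]
        rw [h3, mul_sub, sub_mul]
      rw [hform, hXU, hdiff, frobNorm, frobSq_eq_trace, conj_diag_transpose, trace_conj_diag_sq hU]
      congr 1
      refine Finset.sum_congr rfl fun i _ => ?_
      rw [show (b - a) i = b i - a i from rfl, ← neg_sub (a i) (b i), neg_sq]
  · -- lower bound (Hoffman–Wielandt)
    rintro d ⟨R, hR, rfl⟩
    have hR' : R * Rᵀ = 1 := hR
    have hV' : V * Vᵀ = 1 := hV
    have hRV : IsOrth (R * V) := by
      show (R * V) * (R * V)ᵀ = 1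
      rw [transpose_mul, mul_assoc, ← mul_assoc V Vᵀ, hV', one_mul, hR']
    have hform : R * Y * Rᵀ = (R * V) * diagonal b * (R * V)ᵀ := by
      rw [hYV, transpose_mul]
      simp only [mul_assoc]
    have hkey := hw_key a b ha hb hU hRV
    rw [← hform, ← hXU] at hkey
    exact Real.sqrt_le_sqrt hkey
end

section
/- The quotient space Sym(n)/O(n) equipped with the spectral distance is a complete metric space. -/
open Matrix BigOperators

section Aux

open Polynomial

variable {n : ℕ}

lemma aux_charpoly_conj (U A : Matrix (Fin n) (Fin n) ℝ)
    (hU : U ∈ Matrix.unitaryGroup (Fin n) ℝ) :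
    (U * A * star U).charpoly = A.charpoly := by
  have h1 : U * star U = 1 := (Matrix.mem_unitaryGroup_iff).mp hU
  have hmap : (U.map (C : ℝ → ℝ[X])) * ((star U).map (C : ℝ → ℝ[X])) = 1 := by
    rw [← Matrix.map_mul, h1]
    ext i j
    by_cases h : i = j <;> simp [h, Matrix.one_apply]
  have hcm : charmatrix (U * A * star U)
      = (U.map (C : ℝ → ℝ[X])) * charmatrix A * ((star U).map (C : ℝ → ℝ[X])) := by
    simp only [charmatrix, RingHom.mapMatrix_apply]
    rw [Matrix.mul_sub, Matrix.sub_mul]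
    congr 1
    · symm
      rw [← (Matrix.scalar_commute (X : ℝ[X]) (fun r' => Commute.all _ _) (U.map C)).eq,
        Matrix.mul_assoc, hmap, Matrix.mul_one]
    · rw [Matrix.map_mul, Matrix.map_mul]
  have hdet : (U.map (C : ℝ → ℝ[X])).det * ((star U).map (C : ℝ → ℝ[X])).det = 1 := by
    rw [← Matrix.det_mul, hmap, Matrix.det_one]
  rw [Matrix.charpoly, hcm, Matrix.det_mul, Matrix.det_mul, Matrix.charpoly]
  calc (U.map (C : ℝ → ℝ[X])).det * (charmatrix A).det * ((star U).map (C : ℝ → ℝ[X])).det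
      = (U.map (C : ℝ → ℝ[X])).det * ((star U).map (C : ℝ → ℝ[X])).det * (charmatrix A).det := by
        ring
    _ = (charmatrix A).det := by rw [hdet, one_mul]

lemma aux_charpoly_eq_prod {A : Matrix (Fin n) (Fin n) ℝ} (hA : A.IsHermitian) :
    A.charpoly = ∏ i, (X - C (hA.eigenvalues i)) := by
  have hof : (RCLike.ofReal ∘ hA.eigenvalues : Fin n → ℝ) = hA.eigenvalues := by
    funext i; simp
  have := hA.spectral_theorem
  rw [hof] at this
  calc A.charpoly
      = ((Matrix.IsHermitian.eigenvectorUnitary hA : Matrix (Fin n) (Fin n) ℝ) *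
          Matrix.diagonal hA.eigenvalues *
          star (Matrix.IsHermitian.eigenvectorUnitary hA : Matrix (Fin n) (Fin n) ℝ)).charpoly := by
        exact congrArg Matrix.charpoly this
    _ = (Matrix.diagonal hA.eigenvalues).charpoly :=
        aux_charpoly_conj _ _ (Matrix.IsHermitian.eigenvectorUnitary hA).2
    _ = ∏ i, (X - C (hA.eigenvalues i)) := by
        rw [Matrix.charpoly_of_upperTriangular _ (Matrix.blockTriangular_diagonal _)]
        simp

lemma aux_roots_charpoly {A : Matrix (Fin n) (Fin n) ℝ} (hA : A.IsHermitian) :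
    A.charpoly.roots = Multiset.map hA.eigenvalues Finset.univ.val := by
  rw [aux_charpoly_eq_prod hA]
  have : ∏ i, (X - C (hA.eigenvalues i))
      = ((Multiset.map hA.eigenvalues Finset.univ.val).map fun a => X - C a).prod := by
    rw [Multiset.map_map]; rfl
  rw [this, Polynomial.roots_multiset_prod_X_sub_C]

lemma aux_multiset_ofFn (f : Fin n → ℝ) :
    (↑(List.ofFn f) : Multiset ℝ) = Multiset.map f Finset.univ.val := by
  rw [List.ofFn_eq_map]
  rfl

lemma aux_sort_eq_of_perm {f g : Fin n → ℝ}
    (h : (List.ofFn f).Perm (List.ofFn g)) :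
    f ∘ Tuple.sort f = g ∘ Tuple.sort g := by
  apply List.ofFn_injective
  exact List.Perm.eq_of_sortedLE
    (Tuple.monotone_sort f).sortedLE_ofFn (Tuple.monotone_sort g).sortedLE_ofFn
    (((Equiv.Perm.ofFn_comp_perm _ f).trans h).trans (Equiv.Perm.ofFn_comp_perm _ g).symm)

lemma aux_isHermitian_of_isSymm {A : Matrix (Fin n) (Fin n) ℝ} (hA : A.IsSymm) :
    A.IsHermitian := by
  have : Aᴴ = Aᵀ := by ext i j; simp [Matrix.conjTranspose_apply]
  rw [Matrix.IsHermitian, this]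
  exact hA

lemma aux_sortedEig_eq {A : Matrix (Fin n) (Fin n) ℝ} (hA : A.IsHermitian) :
    sortedEig A = hA.eigenvalues ∘ Tuple.sort hA.eigenvalues := by
  rw [sortedEig, dif_pos hA]

lemma aux_sortedEig_monotone {A : Matrix (Fin n) (Fin n) ℝ} (hA : A.IsHermitian) :
    Monotone (sortedEig A) := by
  rw [aux_sortedEig_eq hA]
  exact Tuple.monotone_sort _

/-- sortedEig of a diagonal matrix with monotone entries is those entries. -/
lemma aux_sortedEig_diagonal {w : Fin n → ℝ} (hw : Monotone w) :
    sortedEig (Matrix.diagonal w) = w := by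
  have hd : (Matrix.diagonal w).IsHermitian :=
    aux_isHermitian_of_isSymm (Matrix.isSymm_diagonal w)
  rw [aux_sortedEig_eq hd]
  -- the eigenvalue multiset of `diagonal w` is the multiset of `w`
  have hroots : Multiset.map hd.eigenvalues Finset.univ.val
      = Multiset.map w Finset.univ.val := by
    have h2 : (Matrix.diagonal w).charpoly
        = ((Multiset.map w Finset.univ.val).map fun a => X - C a).prod := by
      rw [Matrix.charpoly_of_upperTriangular _ (Matrix.blockTriangular_diagonal _),
        Multiset.map_map]
      simp only [Matrix.diagonal_apply_eq]
      rfl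
    rw [← aux_roots_charpoly hd, h2, Polynomial.roots_multiset_prod_X_sub_C]
  have hperm : (List.ofFn hd.eigenvalues).Perm (List.ofFn w) := by
    rw [← Multiset.coe_eq_coe, aux_multiset_ofFn, aux_multiset_ofFn]
    exact hroots
  calc hd.eigenvalues ∘ Tuple.sort hd.eigenvalues
      = w ∘ Tuple.sort w := aux_sort_eq_of_perm hperm
    _ = w := by
        rw [Tuple.sort_eq_refl_iff_monotone.mpr hw]
        ext i
        simp

lemma aux_specDist_eq (X Y : Matrix (Fin n) (Fin n) ℝ) (x y : EuclideanSpace ℝ (Fin n))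
    (hx : ∀ i, x i = sortedEig X i) (hy : ∀ i, y i = sortedEig Y i) :
    specDist X Y = dist x y := by
  rw [EuclideanSpace.dist_eq, specDist]
  congr 1
  refine Finset.sum_congr rfl fun i _ => ?_
  rw [Real.dist_eq, sq_abs, hx, hy]

end Aux

/-- Completeness of the quotient Sym(n)/O(n) with the spectral distance: every
Cauchy sequence of symmetric matrices (w.r.t. the spectral distance) converges to
some symmetric matrix in the spectral distance. -/
theorem stmt_10 {n : ℕ} (u : ℕ → {X : Matrix (Fin n) (Fin n) ℝ // X.IsSymm})
    (hcauchy : ∀ ε > 0, ∃ N : ℕ, ∀ m ≥ N, ∀ k ≥ N, specDist (u m).1 (u k).1 < ε) :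
    ∃ L : {X : Matrix (Fin n) (Fin n) ℝ // X.IsSymm},
      Filter.Tendsto (fun m => specDist (u m).1 L.1) Filter.atTop (nhds 0) := by
  set v : ℕ → EuclideanSpace ℝ (Fin n) := fun m => WithLp.toLp 2 (sortedEig (u m).1) with hv
  have hvmono : ∀ m, Monotone (v m) := fun m =>
    aux_sortedEig_monotone (aux_isHermitian_of_isSymm (u m).2)
  have hcv : CauchySeq v := by
    rw [Metric.cauchySeq_iff]
    intro ε hε
    obtain ⟨N, hN⟩ := hcauchy ε hε
    exact ⟨N, fun m hm k hk => by
      have := hN m hm k hk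
      rwa [aux_specDist_eq (u m).1 (u k).1 (v m) (v k) (fun i => rfl) (fun i => rfl)]
        at this⟩
  obtain ⟨w, hw⟩ := cauchySeq_tendsto_of_complete hcv
  have hwmono : Monotone w := by
    intro i j hij
    have hi : Filter.Tendsto (fun m => v m i) Filter.atTop (nhds (w i)) :=
      ((PiLp.continuous_apply 2 _ i).tendsto w).comp hw
    have hj : Filter.Tendsto (fun m => v m j) Filter.atTop (nhds (w j)) :=
      ((PiLp.continuous_apply 2 _ j).tendsto w).comp hw
    exact le_of_tendsto_of_tendsto' hi hj fun m => hvmono m hij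
  refine ⟨⟨Matrix.diagonal w, Matrix.isSymm_diagonal w⟩, ?_⟩
  have hL : sortedEig (Matrix.diagonal w) = w := aux_sortedEig_diagonal hwmono
  have : (fun m => specDist (u m).1 (Matrix.diagonal w)) = fun m => dist (v m) w := by
    funext m
    exact aux_specDist_eq (u m).1 (Matrix.diagonal w) (v m) w (fun i => rfl)
      (fun i => (congrFun hL i).symm)
  rw [this]
  exact (tendsto_iff_dist_tendsto_zero).mp hw
end
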